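/- arXiv:2404.00325 — 4 statements merged into one kernel-verified Lean document; each statement's English description precedes it below -/
import Mathlib

section
/- Let D be an eulerian digraph (connected, with in-degree equal to out-degree at every vertex) and let s, t be distinct vertices such that every edge cut of the underlying undirected graph separating s from t contains at least 2k edges, where k ≥ 1. Then D contains k pairwise arc-disjoint directed paths from s to t and k pairwise arc-disjoint directed paths from t to s, all 2k paths being pairwise arc-disjoint. -/
/-!
Since `D` is balanced, every vertex set is left by as many arcs as enter it, so the hypothesis
gives at least `k` arcs leaving every `U` with `s ∈ U`, `t ∉ U`. By max-flow/min-cut (augmenting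
paths) there is a 0/1 flow `f` of value `k` from `s` to `t`. For `t ∈ U`, `s ∉ U`, conservation
of `f` shows that `f` uses at least `k` fewer arcs leaving `U` than entering it; as both numbers
of arcs are equal, at least `k` arcs leaving `U` are unused by `f`. Hence there is a second 0/1
flow `g ≤ 1 - f` of value `k` from `t` to `s`, and decomposing `f` and `g` into directed paths
gives the `2k` arc-disjoint paths.
-/

/-- Directed walks in a digraph given by source/target maps. -/
def IsDiWalk {V A : Type} (src tgt : A → V) : V → V → List A → Prop
  | s, t, [] => s = t
  | s, t, a :: l => src a = s ∧ IsDiWalk src tgt (tgt a) t l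

/-- A directed path: a directed walk with no repeated vertices. -/
def IsDiPath {V A : Type} (src tgt : A → V) (s t : V) (l : List A) : Prop :=
  IsDiWalk src tgt s t l ∧ (s :: l.map tgt).Nodup

section Paths

variable {V A : Type} {src tgt : A → V}

def arcRel (src tgt : A → V) (P : A → Prop) (u v : V) : Prop :=
  ∃ a, P a ∧ src a = u ∧ tgt a = v

lemma IsDiPath.nodup {s t : V} {l : List A} (h : IsDiPath src tgt s t l) : l.Nodup :=
  (List.nodup_cons.1 h.2).2.of_map tgt

lemma IsDiPath.exists_diPath_of_mem {w v u : V} :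
    ∀ {p : List A}, IsDiPath src tgt w v p → u ∈ w :: p.map tgt →
      ∃ q, IsDiPath src tgt u v q ∧ q ⊆ p
  | [], hp, hu => by
    obtain rfl : u = w := List.mem_singleton.1 hu
    exact ⟨[], hp, List.Subset.refl _⟩
  | b :: p, hp, hu => by
    obtain ⟨⟨hb, hwalk⟩, hnd⟩ := hp
    rcases List.mem_cons.1 hu with rfl | hu
    · exact ⟨b :: p, ⟨⟨hb, hwalk⟩, hnd⟩, List.Subset.refl _⟩
    · obtain ⟨q, hq, hqp⟩ :=
        IsDiPath.exists_diPath_of_mem (p := p) ⟨hwalk, (List.nodup_cons.1 hnd).2⟩ hu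
      exact ⟨q, hq, List.Subset.trans hqp (List.subset_cons_self _ _)⟩

lemma IsDiWalk.exists_diPath {v : V} :
    ∀ {u : V} {l : List A}, IsDiWalk src tgt u v l → ∃ q, IsDiPath src tgt u v q ∧ q ⊆ l
  | u, [], h => ⟨[], ⟨h, List.nodup_singleton u⟩, List.Subset.refl _⟩
  | u, a :: l, ⟨ha, hl⟩ => by
    classical
    obtain ⟨p, hp, hpl⟩ := IsDiWalk.exists_diPath hl
    by_cases hu : u ∈ tgt a :: p.map tgt
    · obtain ⟨q, hq, hqp⟩ := hp.exists_diPath_of_mem hu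
      exact ⟨q, hq, List.Subset.trans (List.Subset.trans hqp hpl) (List.subset_cons_self _ _)⟩
    · exact ⟨a :: p, ⟨⟨ha, hp.1⟩, List.nodup_cons.2 ⟨hu, hp.2⟩⟩, List.cons_subset_cons _ hpl⟩

lemma exists_diPath_of_reflTransGen {P : A → Prop} {u v : V}
    (h : Relation.ReflTransGen (arcRel src tgt P) u v) :
    ∃ l, IsDiPath src tgt u v l ∧ ∀ a ∈ l, P a := by
  have hwalk : ∃ l, IsDiWalk src tgt u v l ∧ ∀ a ∈ l, P a := by
    induction h using Relation.ReflTransGen.head_induction_on with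
    | refl => exact ⟨[], rfl, by simp⟩
    | head hrel _ ih =>
      obtain ⟨a, ha, rfl, rfl⟩ := hrel
      obtain ⟨l, hl, hlP⟩ := ih
      exact ⟨a :: l, ⟨rfl, hl⟩, List.forall_mem_cons.2 ⟨ha, hlP⟩⟩
  obtain ⟨l, hl, hlP⟩ := hwalk
  obtain ⟨q, hq, hql⟩ := hl.exists_diPath
  exact ⟨q, hq, fun a ha => hlP a (hql ha)⟩

end Paths

open Finset

section Flow

variable {V A : Type} [Fintype A] [DecidableEq V] (src tgt : A → V)

def netOut (f : A → ℤ) (v : V) : ℤ :=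
  ∑ a, ((if src a = v then f a else 0) - if tgt a = v then f a else 0)

-- `(a, true)` traverses the arc `a` forwards, `(a, false)` backwards; the target map of these
-- signed arcs is `signedSrc tgt src`.
def signedSrc (e : A × Bool) : V :=
  bif e.2 then src e.1 else tgt e.1

-- `outFlow tgt src f U` is the flow entering `U`.
def outFlow (f : A → ℤ) (U : Finset V) : ℤ :=
  ∑ a with src a ∈ U ∧ tgt a ∉ U, f a

lemma netOut_add (f g : A → ℤ) :
    netOut src tgt (f + g) = netOut src tgt f + netOut src tgt g := by
  ext v
  simp only [netOut, Pi.add_apply, ← sum_add_distrib]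
  refine sum_congr rfl fun a _ => ?_
  split_ifs <;> ring

lemma netOut_sub (f g : A → ℤ) :
    netOut src tgt (f - g) = netOut src tgt f - netOut src tgt g := by
  ext v
  simp only [netOut, Pi.sub_apply, ← sum_sub_distrib]
  refine sum_congr rfl fun a _ => ?_
  split_ifs <;> ring

lemma netOut_zero : netOut src tgt (0 : A → ℤ) = 0 := by
  ext v
  simp [netOut]

lemma netOut_single [DecidableEq A] (b : A) :
    netOut src tgt (Pi.single b 1) = Pi.single (src b) 1 - Pi.single (tgt b) 1 := by
  ext v
  simp only [netOut, Pi.sub_apply, Pi.single_apply]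
  rw [sum_eq_single b (fun a _ hab => by simp [hab]) (by simp)]
  simp [eq_comm]

lemma IsDiWalk.netOut_count [BEq A] [LawfulBEq A] {w : V} :
    ∀ {u : V} {l : List A}, IsDiWalk src tgt u w l →
      netOut src tgt (fun a => (l.count a : ℤ)) = Pi.single u 1 - Pi.single w 1
  | u, [], h => by
    subst h
    ext v
    simp [netOut]
  | u, b :: l, ⟨hb, hl⟩ => by
    classical
    have hcount :
        (fun a => ((b :: l).count a : ℤ)) = (fun a => (l.count a : ℤ)) + Pi.single b 1 := by
      ext a
      simp only [List.count_cons, beq_iff_eq, Pi.add_apply, Pi.single_apply, @eq_comm _ a b]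
      push_cast
      rfl
    rw [hcount, netOut_add, IsDiWalk.netOut_count hl, netOut_single, hb]
    abel

lemma netOut_signed (g : A × Bool → ℤ) :
    netOut (signedSrc src tgt) (signedSrc tgt src) g
      = netOut src tgt (fun a => g (a, true) - g (a, false)) := by
  ext v
  simp only [netOut, signedSrc, Fintype.sum_prod_type, Fintype.sum_bool, cond_true, cond_false]
  refine sum_congr rfl fun a _ => ?_
  by_cases hs : src a = v <;> by_cases ht : tgt a = v <;> simp [hs, ht] <;> ring

lemma sum_netOut (f : A → ℤ) (U : Finset V) :
    ∑ v ∈ U, netOut src tgt f v = outFlow src tgt f U - outFlow tgt src f U := by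
  simp only [netOut, outFlow, sum_filter]
  rw [sum_comm, ← sum_sub_distrib]
  refine sum_congr rfl fun a _ => ?_
  rw [sum_sub_distrib, sum_ite_eq, sum_ite_eq]
  by_cases hs : src a ∈ U <;> by_cases ht : tgt a ∈ U <;> simp [hs, ht]

lemma outFlow_sub_outFlow_of_netOut {f : A → ℤ} {s t : V} {m : ℤ}
    (hf : netOut src tgt f = Pi.single s m - Pi.single t m) (U : Finset V) :
    outFlow src tgt f U - outFlow tgt src f U
      = (if s ∈ U then m else 0) - if t ∈ U then m else 0 := by
  rw [← sum_netOut, hf]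
  simp [sum_sub_distrib, sum_pi_single']

end Flow

section Residual

variable {V A : Type} [Fintype A] [DecidableEq V] (src tgt : A → V)

def IsResidualArc (cap f : A → ℤ) : A × Bool → Prop
  | (a, true) => f a < cap a
  | (a, false) => 0 < f a

def residualRel (cap f : A → ℤ) : V → V → Prop :=
  arcRel (signedSrc src tgt) (signedSrc tgt src) (IsResidualArc cap f)

lemma exists_saturated_cut [Fintype V] {cap f : A → ℤ} (hf0 : 0 ≤ f) (hfc : f ≤ cap) {s t : V}
    (hst : ¬ Relation.ReflTransGen (residualRel src tgt cap f) s t) :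
    ∃ U : Finset V, s ∈ U ∧ t ∉ U ∧
      outFlow src tgt f U = outFlow src tgt cap U ∧ outFlow tgt src f U = 0 := by
  classical
  set U : Finset V := {v | Relation.ReflTransGen (residualRel src tgt cap f) s v}
  have hU : ∀ v, v ∈ U ↔ Relation.ReflTransGen (residualRel src tgt cap f) s v := by simp [U]
  refine ⟨U, (hU s).2 .refl, fun h => hst ((hU t).1 h), sum_congr rfl fun a ha => ?_,
    sum_eq_zero fun a ha => ?_⟩
  · simp only [mem_filter, mem_univ, true_and, hU] at ha
    refine le_antisymm (hfc a) (not_lt.1 fun hlt => ha.2 ?_)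
    exact ha.1.tail ⟨(a, true), hlt, rfl, rfl⟩
  · simp only [mem_filter, mem_univ, true_and, hU] at ha
    refine le_antisymm (not_lt.1 fun hpos => ha.2 ?_) (hf0 a)
    exact ha.1.tail ⟨(a, false), hpos, rfl, rfl⟩

lemma exists_augmented_flow {cap f : A → ℤ} (hf0 : 0 ≤ f) (hfc : f ≤ cap)
    {s t : V} {p : List (A × Bool)} (hp : IsDiPath (signedSrc src tgt) (signedSrc tgt src) s t p)
    (hres : ∀ e ∈ p, IsResidualArc cap f e) :
    ∃ f' : A → ℤ, 0 ≤ f' ∧ f' ≤ cap ∧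
      netOut src tgt f' = netOut src tgt f + (Pi.single s 1 - Pi.single t 1) := by
  classical
  have hcount : ∀ e, p.count e = 0 ∨ (p.count e = 1 ∧ IsResidualArc cap f e) := by
    intro e
    by_cases he : e ∈ p
    · exact .inr ⟨List.count_eq_one_of_mem hp.nodup he, hres e he⟩
    · exact .inl (List.count_eq_zero_of_not_mem he)
  have hbounds : ∀ a, 0 ≤ f a + ((p.count (a, true) : ℤ) - p.count (a, false)) ∧
      f a + ((p.count (a, true) : ℤ) - p.count (a, false)) ≤ cap a := by
    intro a
    have h0 : 0 ≤ f a := hf0 a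
    have hc : f a ≤ cap a := hfc a
    rcases hcount (a, true) with h1 | ⟨h1, hr1⟩ <;> rcases hcount (a, false) with h2 | ⟨h2, hr2⟩ <;>
      simp only [IsResidualArc] at * <;> omega
  refine ⟨f + fun a => (p.count (a, true) : ℤ) - p.count (a, false),
    fun a => (hbounds a).1, fun a => (hbounds a).2, ?_⟩
  rw [netOut_add, ← netOut_signed src tgt (fun e => (p.count e : ℤ)), hp.1.netOut_count]

end Residual

section MaxFlow

variable {V A : Type} [Fintype V] [Fintype A] [DecidableEq V] (src tgt : A → V)

theorem exists_flow_of_le_outFlow {cap : A → ℤ} (hcap : 0 ≤ cap) {s t : V} (k : ℕ)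
    (hcut : ∀ U : Finset V, s ∈ U → t ∉ U → (k : ℤ) ≤ outFlow src tgt cap U) :
    ∃ f : A → ℤ, 0 ≤ f ∧ f ≤ cap ∧
      netOut src tgt f = Pi.single s (k : ℤ) - Pi.single t (k : ℤ) := by
  induction k with
  | zero => exact ⟨0, le_rfl, hcap, by simp [netOut_zero]⟩
  | succ k ih =>
    obtain ⟨f, hf0, hfc, hf⟩ := ih fun U hs ht => by
      have := hcut U hs ht
      push_cast at this
      linarith
    by_cases hreach : Relation.ReflTransGen (residualRel src tgt cap f) s t
    · obtain ⟨p, hp, hres⟩ := exists_diPath_of_reflTransGen hreach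
      obtain ⟨f', hf'0, hf'c, hf'⟩ := exists_augmented_flow src tgt hf0 hfc hp hres
      refine ⟨f', hf'0, hf'c, ?_⟩
      rw [hf', hf]
      push_cast
      simp only [Pi.single_add]
      abel
    · obtain ⟨U, hs, ht, hout, hin⟩ := exists_saturated_cut src tgt hf0 hfc hreach
      have hvalue := outFlow_sub_outFlow_of_netOut src tgt hf U
      have hcutU := hcut U hs ht
      simp only [hs, ht, if_true, if_false, hout, hin, sub_zero] at hvalue
      push_cast at hcutU
      omega

theorem exists_diPaths_of_netOut [DecidableEq A] {f : A → ℤ} (hf0 : 0 ≤ f) {s t : V} (k : ℕ)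
    (hf : netOut src tgt f = Pi.single s (k : ℤ) - Pi.single t (k : ℤ)) :
    ∃ P : Fin k → List A, (∀ i, IsDiPath src tgt s t (P i)) ∧
      ∀ a, ∑ i, ((P i).count a : ℤ) ≤ f a := by
  induction k generalizing f with
  | zero => exact ⟨Fin.elim0, fun i => i.elim0, fun a => by simpa using hf0 a⟩
  | succ k ih =>
    -- The arcs with `0 < f a` are the residual arcs of the zero flow under the capacity `f`.
    have hreach : Relation.ReflTransGen (arcRel src tgt (0 < f ·)) s t := by
      by_contra h
      have hres : ¬ Relation.ReflTransGen (residualRel src tgt f 0) s t := by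
        refine mt (Relation.ReflTransGen.mono (fun u v ⟨e, he, hu, hv⟩ => ?_) s t) h
        rcases e with ⟨a, _ | _⟩
        · exact absurd he (lt_irrefl 0)
        · exact ⟨a, he, hu, hv⟩
      obtain ⟨U, hs, ht, hout, -⟩ := exists_saturated_cut src tgt le_rfl hf0 hres
      have hvalue := outFlow_sub_outFlow_of_netOut src tgt hf U
      have hout0 : outFlow src tgt f U = 0 := by
        rw [← hout]
        exact sum_const_zero
      have hin : 0 ≤ outFlow tgt src f U := sum_nonneg fun a _ => hf0 a
      simp only [hs, ht, if_true, if_false, hout0] at hvalue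
      omega
    obtain ⟨p, hp, hpos⟩ := exists_diPath_of_reflTransGen hreach
    have hf'0 : 0 ≤ f - fun a => (p.count a : ℤ) := by
      intro a
      by_cases ha : a ∈ p
      · simpa [List.count_eq_one_of_mem hp.nodup ha] using Int.add_one_le_of_lt (hpos a ha)
      · simpa [List.count_eq_zero_of_not_mem ha] using hf0 a
    have hf' : netOut src tgt (f - fun a => (p.count a : ℤ))
        = Pi.single s (k : ℤ) - Pi.single t (k : ℤ) := by
      rw [netOut_sub, hp.1.netOut_count, hf]
      push_cast
      simp only [Pi.single_add]
      abel
    obtain ⟨P, hP, hPf⟩ := ih hf'0 hf'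
    refine ⟨Fin.cons p P, Fin.forall_fin_succ.2 ⟨hp, hP⟩, fun a => ?_⟩
    have := hPf a
    simp only [Fin.sum_univ_succ, Fin.cons_zero, Fin.cons_succ, Pi.sub_apply] at this ⊢
    linarith

end MaxFlow

section Eulerian

variable {V A : Type} [Fintype A] [DecidableEq V] (src tgt : A → V)

lemma netOut_one_eq_zero (hbal : ∀ v : V, {a : A | tgt a = v}.ncard = {a : A | src a = v}.ncard) :
    netOut src tgt (1 : A → ℤ) = 0 := by
  classical
  ext v
  have := hbal v
  simp only [Set.ncard_eq_toFinset_card', Set.toFinset_ofPred] at this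
  simp [netOut, sum_sub_distrib, sum_boole, this]

lemma ncard_cut_eq (U : Finset V) :
    ({a : A | (src a ∈ (U : Set V) ∧ tgt a ∉ (U : Set V)) ∨
      (tgt a ∈ (U : Set V) ∧ src a ∉ (U : Set V))}.ncard : ℤ)
      = outFlow src tgt 1 U + outFlow tgt src 1 U := by
  classical
  simp only [outFlow, Pi.one_apply, sum_const, nsmul_eq_mul, mul_one, Set.ncard_eq_toFinset_card',
    Set.toFinset_ofPred, mem_coe]
  rw [← Nat.cast_add, ← card_union_of_disjoint
    (disjoint_filter.2 fun a _ hout hin => hout.2 hin.1), filter_or]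

lemma outFlow_eq_of_netOut_eq_zero {f : A → ℤ} (hf : netOut src tgt f = 0) (U : Finset V) :
    outFlow src tgt f U = outFlow tgt src f U := by
  have := sum_netOut src tgt f U
  simp only [hf, Pi.zero_apply, sum_const_zero] at this
  omega

lemma le_outFlow_sub {cap f : A → ℤ} (hcap : netOut src tgt cap = 0) (hfc : f ≤ cap) {s t : V}
    {k : ℤ} (hf : netOut src tgt f = Pi.single s k - Pi.single t k) {U : Finset V} (ht : t ∈ U)
    (hs : s ∉ U) : k ≤ outFlow src tgt (cap - f) U := by
  have hvalue := outFlow_sub_outFlow_of_netOut src tgt hf U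
  have hcapU := outFlow_eq_of_netOut_eq_zero src tgt hcap U
  have hin : outFlow tgt src f U ≤ outFlow tgt src cap U := sum_le_sum fun a _ => hfc a
  have hsub : outFlow src tgt (cap - f) U = outFlow src tgt cap U - outFlow src tgt f U :=
    sum_sub_distrib ..
  simp only [hs, ht, if_true, if_false] at hvalue
  linarith

end Eulerian

section Disjoint

variable {A : Type} [DecidableEq A] {k : ℕ} {P : Fin k → List A}

lemma one_le_of_mem_of_sum_count_le {f : A → ℤ} (hP : ∀ a, ∑ i, ((P i).count a : ℤ) ≤ f a)
    {i : Fin k} {a : A} (ha : a ∈ P i) : 1 ≤ f a :=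
  calc 1 ≤ ((P i).count a : ℤ) := by exact_mod_cast List.count_pos_iff.2 ha
    _ ≤ ∑ j, ((P j).count a : ℤ) :=
      single_le_sum (f := fun j => ((P j).count a : ℤ)) (fun j _ => by positivity) (mem_univ i)
    _ ≤ f a := hP a

lemma not_mem_of_sum_count_le_one (hP : ∀ a, ∑ i, ((P i).count a : ℤ) ≤ 1) {i j : Fin k}
    (hij : i ≠ j) {a : A} (ha : a ∈ P i) : a ∉ P j := by
  intro hja
  have hpair : ∑ l ∈ {i, j}, ((P l).count a : ℤ) ≤ ∑ l, ((P l).count a : ℤ) :=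
    sum_le_sum_of_subset_of_nonneg (subset_univ _) fun _ _ _ => by positivity
  rw [sum_pair hij] at hpair
  have := hP a
  have := List.count_pos_iff.2 ha
  have := List.count_pos_iff.2 hja
  omega

end Disjoint

theorem stmt_3_general {V A : Type} [Fintype V] [Fintype A] (src tgt : A → V)
    (hbal : ∀ v : V, {a : A | tgt a = v}.ncard = {a : A | src a = v}.ncard)
    (s t : V) (k : ℕ)
    (hcut : ∀ U : Set V, s ∈ U → t ∉ U →
      2 * k ≤ {a : A | (src a ∈ U ∧ tgt a ∉ U) ∨ (tgt a ∈ U ∧ src a ∉ U)}.ncard) :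
    ∃ P Q : Fin k → List A,
      (∀ i, IsDiPath src tgt s t (P i)) ∧ (∀ i, IsDiPath src tgt t s (Q i)) ∧
      (∀ i j, i ≠ j → ∀ a ∈ P i, a ∉ P j) ∧
      (∀ i j, i ≠ j → ∀ a ∈ Q i, a ∉ Q j) ∧
      (∀ i j, ∀ a ∈ P i, a ∉ Q j) := by
  classical
  have hbal' := netOut_one_eq_zero src tgt hbal
  have hcut' : ∀ U : Finset V, s ∈ U → t ∉ U → (k : ℤ) ≤ outFlow src tgt 1 U := by
    intro U hs ht
    have hU := hcut U (mem_coe.2 hs) (mt mem_coe.1 ht)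
    have := ncard_cut_eq src tgt U
    have := outFlow_eq_of_netOut_eq_zero src tgt hbal' U
    omega
  obtain ⟨f, hf0, hf1, hf⟩ := exists_flow_of_le_outFlow src tgt zero_le_one k hcut'
  obtain ⟨g, hg0, hg1, hg⟩ := exists_flow_of_le_outFlow src tgt (sub_nonneg.2 hf1) k
    fun U ht hs => le_outFlow_sub src tgt hbal' hf1 hf ht hs
  have hg1' : g ≤ 1 := fun a => (hg1 a).trans (sub_le_self 1 (hf0 a))
  obtain ⟨P, hP, hPf⟩ := exists_diPaths_of_netOut src tgt hf0 k hf
  obtain ⟨Q, hQ, hQg⟩ := exists_diPaths_of_netOut src tgt hg0 k hg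
  refine ⟨P, Q, hP, hQ,
    fun i j hij a => not_mem_of_sum_count_le_one (fun a => (hPf a).trans (hf1 a)) hij,
    fun i j hij a => not_mem_of_sum_count_le_one (fun a => (hQg a).trans (hg1' a)) hij,
    fun i j a hPa hQa => ?_⟩
  have hfa := one_le_of_mem_of_sum_count_le hPf hPa
  have hga := one_le_of_mem_of_sum_count_le hQg hQa
  have := hg1 a
  simp only [Pi.sub_apply, Pi.one_apply] at this
  omega

/-- In an eulerian digraph (connected, balanced), if every edge cut of
the underlying undirected graph separating distinct vertices `s` and `t` has at
least `2k` edges (`k ≥ 1`), then there are `k` directed `s→t` paths and `k`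
directed `t→s` paths, all `2k` pairwise arc-disjoint. -/
theorem stmt_3 {V A : Type} [Fintype V] [Fintype A] (src tgt : A → V)
    (hbal : ∀ v : V, {a : A | tgt a = v}.ncard = {a : A | src a = v}.ncard)
    (hconn : ∀ u v : V, ∃ l : List A, IsDiWalk src tgt u v l)
    (s t : V) (hst : s ≠ t) (k : ℕ) (hk : 1 ≤ k)
    (hcut : ∀ U : Set V, s ∈ U → t ∉ U →
      2 * k ≤ {a : A | (src a ∈ U ∧ tgt a ∉ U) ∨ (tgt a ∈ U ∧ src a ∉ U)}.ncard) :
    ∃ P Q : Fin k → List A,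
      (∀ i, IsDiPath src tgt s t (P i)) ∧ (∀ i, IsDiPath src tgt t s (Q i)) ∧
      (∀ i j, i ≠ j → ∀ a ∈ P i, a ∉ P j) ∧
      (∀ i j, i ≠ j → ∀ a ∈ Q i, a ∉ Q j) ∧
      (∀ i j, ∀ a ∈ P i, a ∉ Q j) :=
  stmt_3_general src tgt hbal s t k hcut
end

section
/- Let D be an eulerian digraph and suppose there is a directed trail in D visiting vertices v₁, v₂, …, v_k in that order. Then D has a directed euler circuit visiting v₁, v₂, …, v_k in that order. -/
theorem List.Nodup.countP_eq_ncard {α : Type*} {l : List α} (hl : l.Nodup) (p : α → Bool) :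
    l.countP p = {a | a ∈ l ∧ p a}.ncard := by
  classical
  rw [List.countP_eq_length_filter, ← List.toFinset_card_of_nodup (hl.filter p),
    ← Set.ncard_coe_finset]
  congr
  ext
  simp

namespace IsDiWalk

variable {V A : Type} {src tgt : A → V}

theorem append {s m t : V} {l₁ l₂ : List A} (h₁ : IsDiWalk src tgt s m l₁)
    (h₂ : IsDiWalk src tgt m t l₂) : IsDiWalk src tgt s t (l₁ ++ l₂) := by
  induction l₁ generalizing s with
  | nil => cases h₁; exact h₂
  | cons a l ih => exact ⟨h₁.1, ih h₁.2⟩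

theorem concat {s t : V} {l : List A} {a : A} (h : IsDiWalk src tgt s t l) (ha : src a = t) :
    IsDiWalk src tgt s (tgt a) (l ++ [a]) :=
  h.append ⟨ha, rfl⟩

theorem exists_eq_append_of_mem {s t v : V} {l : List A} (h : IsDiWalk src tgt s t l)
    (hv : v ∈ s :: l.map tgt) :
    ∃ l₁ l₂, l = l₁ ++ l₂ ∧ IsDiWalk src tgt s v l₁ ∧
      IsDiWalk src tgt v t l₂ := by
  induction l generalizing s with
  | nil =>
    obtain rfl : v = s := List.mem_singleton.1 hv
    exact ⟨[], [], rfl, rfl, h⟩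
  | cons a l ih =>
    rcases List.mem_cons.1 hv with rfl | hv
    · exact ⟨[], a :: l, rfl, rfl, h⟩
    · obtain ⟨l₁, l₂, rfl, h₁, h₂⟩ := ih h.2 hv
      exact ⟨a :: l₁, l₂, rfl, ⟨h.1, h₁⟩, h₂⟩

theorem mem_of_forall_tgt_mem {S : Set V} (hS : ∀ a, src a ∈ S → tgt a ∈ S) {s t : V}
    {l : List A} (h : IsDiWalk src tgt s t l) (hs : s ∈ S) : t ∈ S := by
  induction l generalizing s with
  | nil => exact h ▸ hs
  | cons a l ih => exact ih h.2 (hS a (h.1 ▸ hs))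

theorem countP_tgt_add_ite [DecidableEq V] {s t : V} {l : List A}
    (h : IsDiWalk src tgt s t l) (v : V) :
    l.countP (tgt · = v) + (if s = v then 1 else 0)
      = l.countP (src · = v) + (if t = v then 1 else 0) := by
  induction l generalizing s with
  | nil => cases h; rfl
  | cons a l ih =>
    obtain ⟨rfl, hl⟩ := h
    have := ih hl
    simp only [List.countP_cons, decide_eq_true_eq]
    omega

end IsDiWalk

theorem exists_not_mem_src_mem {V A : Type} {src tgt : A → V}
    (hconn : ∀ u v : V, ∃ l : List A, IsDiWalk src tgt u v l)
    {u : V} {l : List A} {b : A} (hb : b ∉ l) :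
    ∃ a, a ∉ l ∧ src a ∈ u :: l.map tgt := by
  by_contra! hclosed
  have hforward (a : A) (ha : src a ∈ {v | v ∈ u :: l.map tgt}) :
      tgt a ∈ {v | v ∈ u :: l.map tgt} := by
    by_cases hal : a ∈ l
    · exact List.mem_cons_of_mem _ (List.mem_map_of_mem hal)
    · exact absurd ha (hclosed a hal)
  obtain ⟨m, hm⟩ := hconn u (src b)
  exact hclosed b hb (hm.mem_of_forall_tgt_mem hforward List.mem_cons_self)

section Eulerian

variable {V A : Type} [Fintype A] {src tgt : A → V}

theorem exists_src_eq_not_mem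
    (hbal : ∀ v : V, {a : A | tgt a = v}.ncard = {a : A | src a = v}.ncard)
    {s t : V} {l : List A} (h : IsDiWalk src tgt s t l) (hnd : l.Nodup) (hst : s ≠ t) :
    ∃ a, src a = t ∧ a ∉ l := by
  classical
  by_contra! hall
  have hflow := h.countP_tgt_add_ite t
  rw [if_neg hst, if_pos rfl, hnd.countP_eq_ncard, hnd.countP_eq_ncard] at hflow
  have hin : {a | a ∈ l ∧ decide (tgt a = t)}.ncard ≤ {a : A | tgt a = t}.ncard :=
    Set.ncard_le_ncard (fun a ha => by simpa using ha.2)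
  have hout : {a : A | src a = t}.ncard ≤ {a | a ∈ l ∧ decide (src a = t)}.ncard :=
    Set.ncard_le_ncard (fun a ha => ⟨hall a ha, by simpa using ha⟩)
  linarith [hbal t]

theorem exists_closing_trail
    (hbal : ∀ v : V, {a : A | tgt a = v}.ncard = {a : A | src a = v}.ncard)
    {s t : V} {l : List A} (h : IsDiWalk src tgt s t l) (hnd : l.Nodup) :
    ∃ e, IsDiWalk src tgt t s e ∧ (l ++ e).Nodup := by
  by_cases hst : s = t
  · exact ⟨[], hst ▸ rfl, by simpa using hnd⟩
  obtain ⟨a, rfl, hal⟩ := exists_src_eq_not_mem hbal h hnd hst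
  have hnd' : (l ++ [a]).Nodup :=
    hnd.append (List.nodup_singleton a) (List.disjoint_singleton.2 hal)
  obtain ⟨e, he, hnde⟩ := exists_closing_trail hbal (h.concat rfl) hnd'
  exact ⟨a :: e, ⟨rfl, he⟩, by simpa using hnde⟩
termination_by Fintype.card A - l.length
decreasing_by
  have := hnd'.length_le_card
  simp only [List.length_append, List.length_singleton] at this ⊢
  omega

theorem exists_longer_circuit
    (hbal : ∀ v : V, {a : A | tgt a = v}.ncard = {a : A | src a = v}.ncard)
    (hconn : ∀ u v : V, ∃ l : List A, IsDiWalk src tgt u v l)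
    {u : V} {l : List A} (h : IsDiWalk src tgt u u l) (hnd : l.Nodup) {b : A} (hb : b ∉ l) :
    ∃ l', IsDiWalk src tgt u u l' ∧ l'.Nodup ∧ l.Sublist l' ∧ l.length < l'.length := by
  classical
  obtain ⟨a, hal, hav⟩ := exists_not_mem_src_mem hconn (u := u) hb
  obtain ⟨l₁, l₂, rfl, h₁, h₂⟩ := h.exists_eq_append_of_mem hav
  have hrot : (l₂ ++ l₁ ++ [a]).Perm (a :: (l₁ ++ l₂)) := List.perm_iff_count.2 fun x => by
    simp only [List.count_append, List.count_cons, List.count_nil]; omega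
  obtain ⟨e, he, hnde⟩ := exists_closing_trail hbal ((h₂.append h₁).concat rfl)
    (hrot.nodup_iff.2 (List.nodup_cons.2 ⟨hal, hnd⟩))
  refine ⟨l₁ ++ a :: (e ++ l₂), h₁.append ⟨rfl, he.append h₂⟩, ?_, ?_, ?_⟩
  · refine (List.perm_iff_count.2 fun x => ?_).nodup_iff.1 hnde
    simp only [List.count_append, List.count_cons, List.count_nil]; omega
  · exact ((List.sublist_append_right e l₂).cons a).append_left l₁
  · simp

theorem exists_eulerCircuit_of_circuit
    (hbal : ∀ v : V, {a : A | tgt a = v}.ncard = {a : A | src a = v}.ncard)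
    (hconn : ∀ u v : V, ∃ l : List A, IsDiWalk src tgt u v l)
    {u : V} {l : List A} (h : IsDiWalk src tgt u u l) (hnd : l.Nodup) :
    ∃ l', IsDiWalk src tgt u u l' ∧ l'.Nodup ∧ (∀ a : A, a ∈ l') ∧ l.Sublist l' := by
  by_cases hall : ∀ a : A, a ∈ l
  · exact ⟨l, h, hnd, hall, List.Sublist.refl l⟩
  push Not at hall
  obtain ⟨b, hb⟩ := hall
  obtain ⟨l', h', hnd', hsub, hlt⟩ := exists_longer_circuit hbal hconn h hnd hb
  obtain ⟨l'', h'', hnd'', hall'', hsub'⟩ := exists_eulerCircuit_of_circuit hbal hconn h' hnd'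
  exact ⟨l'', h'', hnd'', hall'', hsub.trans hsub'⟩
termination_by Fintype.card A - l.length
decreasing_by
  have := hnd'.length_le_card
  omega

end Eulerian

theorem stmt_4_general {V A : Type} [Fintype A] (src tgt : A → V)
    (hbal : ∀ v : V, {a : A | tgt a = v}.ncard = {a : A | src a = v}.ncard)
    (hconn : ∀ u v : V, ∃ l : List A, IsDiWalk src tgt u v l)
    (vs : List V) (s t : V) (l : List A)
    (hw : IsDiWalk src tgt s t l) (hnd : l.Nodup)
    (hvis : vs.Sublist (s :: l.map tgt)) :
    ∃ (u : V) (l' : List A), IsDiWalk src tgt u u l' ∧ l'.Nodup ∧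
      (∀ a : A, a ∈ l') ∧ vs.Sublist (u :: l'.map tgt) := by
  obtain ⟨e, he, hnde⟩ := exists_closing_trail hbal hw hnd
  obtain ⟨l', h', hnd', hall, hsub⟩ :=
    exists_eulerCircuit_of_circuit hbal hconn (hw.append he) hnde
  have hl : l.Sublist l' := (List.sublist_append_left l e).trans hsub
  exact ⟨s, l', h', hnd', hall, hvis.trans ((hl.map tgt).cons_cons s)⟩

/-- In an eulerian digraph (connected, balanced), if some directed
trail visits the vertices `vs = [v₁, …, v_k]` in that order (as a sublist of its
vertex sequence), then there is a directed euler circuit visiting them in that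
order. -/
theorem stmt_4 {V A : Type} [Fintype V] [Fintype A] (src tgt : A → V)
    (hbal : ∀ v : V, {a : A | tgt a = v}.ncard = {a : A | src a = v}.ncard)
    (hconn : ∀ u v : V, ∃ l : List A, IsDiWalk src tgt u v l)
    (vs : List V) (s t : V) (l : List A)
    (hw : IsDiWalk src tgt s t l) (hnd : l.Nodup)
    (hvis : vs.Sublist (s :: l.map tgt)) :
    ∃ (u : V) (l' : List A), IsDiWalk src tgt u u l' ∧ l'.Nodup ∧
      (∀ a : A, a ∈ l') ∧ vs.Sublist (u :: l'.map tgt) :=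
  stmt_4_general src tgt hbal hconn vs s t l hw hnd hvis
end

section
/- Let Ĉ_n (n ≥ 2) be the digraph obtained by replacing each edge of an undirected n-cycle by a pair of oppositely directed arcs (a directed digon). Suppose C₁ and C₂ are two directed circuit decompositions of Ĉ_n such that at each vertex, exactly one of C₁, C₂ 'splits' (contains a circuit with consecutive arcs a_{j−1}, b_{j−1} and a circuit with consecutive arcs b_j, a_j, in the labeling where a_i goes from v_i to v_{i+1} and b_i from v_{i+1} to v_i). If C_i splits at n_i ≥ 1 vertices then C_i consists of exactly n_i circuits; if n_i = 0 then C_i consists of exactly 2 circuits (the two hamilton directed cycles). Consequently, if both C₁ and C₂ consist of a single circuit each (a bi-eulerian pair) then n = 2. -/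
/-- Arcs of the digraph `Ĉ_n`: `.inl i` is the arc `a_i : v_i → v_{i+1}`,
`.inr i` is the arc `b_i : v_{i+1} → v_i`. -/
abbrev CHatArc (n : ℕ) := ZMod n ⊕ ZMod n

/-- Given a choice `sp` of which vertices are "split" vertices of a circuit
decomposition of `Ĉ_n`, the successor map sending each arc to the next arc of
its circuit: at a split vertex `v_j` the decomposition pairs `a_{j-1}` with
`b_{j-1}` and `b_j` with `a_j`; otherwise it pairs `a_{j-1}` with `a_j` and
`b_j` with `b_{j-1}`. -/
def cSucc (n : ℕ) (sp : ZMod n → Bool) : CHatArc n → CHatArc n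
  | .inl i => if sp (i + 1) then .inr i else .inl (i + 1)
  | .inr j => if sp j then .inl j else .inr (j - 1)

/-- The number of circuits of the decomposition: the number of orbits of the
successor map. -/
noncomputable def numCircuits (n : ℕ) (sp : ZMod n → Bool) : ℕ :=
  (Set.range fun x : CHatArc n =>
    {y : CHatArc n | Relation.EqvGen (fun u v => cSucc n sp u = v) x y}).ncard

namespace Stmt8Aux

variable {n : ℕ} (sp : ZMod n → Bool)

/-- the equivalence class of an arc -/
def cls (x : CHatArc n) : Set (CHatArc n) :=
  {y : CHatArc n | Relation.EqvGen (fun u v => cSucc n sp u = v) x y}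

lemma numCircuits_eq : numCircuits n sp = (Set.range (cls sp)).ncard := rfl

lemma cls_eq {x y : CHatArc n}
    (h : Relation.EqvGen (fun u v => cSucc n sp u = v) x y) : cls sp x = cls sp y := by
  ext z
  exact ⟨fun hz => (h.symm _ _).trans _ _ _ hz, fun hz => h.trans _ _ _ hz⟩

lemma eqvGen_of_cls_eq {x y : CHatArc n} (h : cls sp x = cls sp y) :
    Relation.EqvGen (fun u v => cSucc n sp u = v) x y := by
  have : y ∈ cls sp y := Relation.EqvGen.refl y
  rw [← h] at this
  exact this

section Pos

variable [NeZero n]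

lemma exk (hex : ∃ j : ZMod n, sp j = true) (i : ZMod n) : ∃ k : ℕ, sp (i - (k : ZMod n)) = true := by
  obtain ⟨j, hj⟩ := hex
  refine ⟨(i - j).val, ?_⟩
  rw [ZMod.natCast_rightInverse (i - j), sub_sub_cancel]
  exact hj

noncomputable def d (hex : ∃ j : ZMod n, sp j = true) (i : ZMod n) : ℕ := Nat.find (exk sp hex i)

noncomputable def f (hex : ∃ j : ZMod n, sp j = true) (i : ZMod n) : ZMod n := i - (d sp hex i : ZMod n)

lemma sp_f (hex : ∃ j : ZMod n, sp j = true) (i : ZMod n) : sp (f sp hex i) = true := Nat.find_spec (exk sp hex i)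

lemma f_eq_self (hex : ∃ j : ZMod n, sp j = true) {i : ZMod n} (hi : sp i = true) : f sp hex i = i := by
  have h0 : d sp hex i = 0 := by
    refine Nat.le_antisymm (Nat.find_le ?_) (Nat.zero_le _)
    simpa using hi
  simp [f, h0]

lemma d_succ (hex : ∃ j : ZMod n, sp j = true) {i : ZMod n} (hi : sp i = false) :
    d sp hex i = d sp hex (i - 1) + 1 := by
  rw [d, Nat.find_eq_iff]
  constructor
  · have := Nat.find_spec (exk sp hex (i - 1))
    have harith : i - ((d sp hex (i - 1) + 1 : ℕ) : ZMod n) = (i - 1) - (d sp hex (i - 1) : ℕ) := by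
      push_cast; ring
    rw [harith]
    exact this
  · intro k hk
    match k with
    | 0 => simpa using hi
    | (k' + 1) =>
      have hk' : k' < d sp hex (i - 1) := by omega
      have := Nat.find_min (exk sp hex (i - 1)) hk'
      have harith : i - ((k' + 1 : ℕ) : ZMod n) = (i - 1) - (k' : ℕ) := by
        push_cast; ring
      rw [harith]
      exact this

lemma f_pred (hex : ∃ j : ZMod n, sp j = true) {i : ZMod n} (hi : sp i = false) : f sp hex i = f sp hex (i - 1) := by
  rw [f, f, d_succ sp hex hi]
  push_cast; ring

/-- invariant -/
noncomputable def F (hex : ∃ j : ZMod n, sp j = true) : CHatArc n → ZMod n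
  | .inl i => f sp hex i
  | .inr i => f sp hex i

lemma F_cSucc (hex : ∃ j : ZMod n, sp j = true) (x : CHatArc n) : F sp hex (cSucc n sp x) = F sp hex x := by
  match x with
  | .inl i =>
    by_cases h : sp (i + 1) = true
    · simp [cSucc, h, F]
    · simp only [Bool.not_eq_true] at h
      simp only [cSucc, h, Bool.false_eq_true, if_false, F]
      rw [f_pred sp hex h, add_sub_cancel_right]
  | .inr j =>
    by_cases h : sp j = true
    · simp [cSucc, h, F]
    · simp only [Bool.not_eq_true] at h
      simp only [cSucc, h, Bool.false_eq_true, if_false, F]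
      rw [f_pred sp hex h]

lemma F_eqvGen (hex : ∃ j : ZMod n, sp j = true) {x y : CHatArc n}
    (h : Relation.EqvGen (fun u v => cSucc n sp u = v) x y) :
    F sp hex x = F sp hex y := by
  induction h with
  | rel u v huv => rw [← huv, F_cSucc]
  | refl => rfl
  | symm _ _ _ ih => exact ih.symm
  | trans _ _ _ _ _ ih1 ih2 => exact ih1.trans ih2

lemma reach_inl (hex : ∃ j : ZMod n, sp j = true) : ∀ m : ℕ, ∀ i : ZMod n, d sp hex i = m →
    Relation.EqvGen (fun u v => cSucc n sp u = v) (.inl (f sp hex i)) (.inl i) := by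
  intro m
  induction m using Nat.strong_induction_on with
  | _ m ih =>
    intro i hdi
    by_cases hsi : sp i = true
    · rw [f_eq_self sp hex hsi]; exact Relation.EqvGen.refl _
    · simp only [Bool.not_eq_true] at hsi
      have hd := d_succ sp hex hsi
      have h1 := ih (d sp hex (i - 1)) (by omega) (i - 1) rfl
      have h2 : cSucc n sp (.inl (i - 1)) = (.inl i : CHatArc n) := by
        simp [cSucc, sub_add_cancel, hsi]
      rw [f_pred sp hex hsi]
      exact h1.trans _ _ _ (Relation.EqvGen.rel _ _ h2)

lemma reach_inr (hex : ∃ j : ZMod n, sp j = true) : ∀ m : ℕ, ∀ i : ZMod n, d sp hex i = m →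
    Relation.EqvGen (fun u v => cSucc n sp u = v) (.inl (f sp hex i)) (.inr i) := by
  intro m
  induction m using Nat.strong_induction_on with
  | _ m ih =>
    intro i hdi
    by_cases hsi : sp i = true
    · rw [f_eq_self sp hex hsi]
      have h2 : cSucc n sp (.inr i) = (.inl i : CHatArc n) := by simp [cSucc, hsi]
      have h3 : Relation.EqvGen (fun u v => cSucc n sp u = v) (.inr i) (.inl i) :=
        Relation.EqvGen.rel _ _ h2
      exact h3.symm _ _
    · simp only [Bool.not_eq_true] at hsi
      have hd := d_succ sp hex hsi
      have h1 := ih (d sp hex (i - 1)) (by omega) (i - 1) rfl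
      have h2 : cSucc n sp (.inr i) = (.inr (i - 1) : CHatArc n) := by
        simp [cSucc, hsi]
      have h3 : Relation.EqvGen (fun u v => cSucc n sp u = v) (.inr i) (.inr (i - 1)) :=
        Relation.EqvGen.rel _ _ h2
      rw [f_pred sp hex hsi]
      exact h1.trans _ _ _ (h3.symm _ _)

lemma sp_F (hex : ∃ j : ZMod n, sp j = true) (x : CHatArc n) :
    sp (F sp hex x) = true := by
  match x with
  | .inl i => exact sp_f sp hex i
  | .inr i => exact sp_f sp hex i

lemma reach (hex : ∃ j : ZMod n, sp j = true) (x : CHatArc n) :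
    Relation.EqvGen (fun u v => cSucc n sp u = v) (.inl (F sp hex x)) x := by
  match x with
  | .inl i => exact reach_inl sp hex _ i rfl
  | .inr i => exact reach_inr sp hex _ i rfl

lemma count_pos (hex : ∃ j : ZMod n, sp j = true) : numCircuits n sp = {j : ZMod n | sp j = true}.ncard := by
  rw [numCircuits_eq]
  have hrange : Set.range (cls sp) =
      (fun j => cls sp (.inl j)) '' {j : ZMod n | sp j = true} := by
    ext s
    constructor
    · rintro ⟨x, rfl⟩
      exact ⟨F sp hex x, sp_F sp hex x, cls_eq sp (reach sp hex x)⟩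
    · rintro ⟨j, _, rfl⟩
      exact ⟨_, rfl⟩
  rw [hrange]
  apply Set.ncard_image_of_injOn
  intro j hj j' hj' h
  have h2 := F_eqvGen sp hex (eqvGen_of_cls_eq sp h)
  simp only [F] at h2
  rwa [f_eq_self sp hex hj, f_eq_self sp hex hj'] at h2

end Pos

section Zero

variable [NeZero n]

lemma chain_inl (hz : ∀ j : ZMod n, sp j = false) : ∀ k : ℕ,
    Relation.EqvGen (fun u v => cSucc n sp u = v) (.inl (0 : ZMod n)) (.inl (k : ZMod n)) := by
  intro k
  induction k with
  | zero => simpa using Relation.EqvGen.refl _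
  | succ k ih =>
    have h2 : cSucc n sp (.inl (k : ZMod n)) = (.inl ((k + 1 : ℕ) : ZMod n) : CHatArc n) := by
      simp [cSucc, hz]
    exact ih.trans _ _ _ (Relation.EqvGen.rel _ _ h2)

lemma chain_inr (hz : ∀ j : ZMod n, sp j = false) : ∀ k : ℕ,
    Relation.EqvGen (fun u v => cSucc n sp u = v) (.inr (0 : ZMod n)) (.inr (k : ZMod n)) := by
  intro k
  induction k with
  | zero => simpa using Relation.EqvGen.refl _
  | succ k ih =>
    have h2 : cSucc n sp (.inr ((k + 1 : ℕ) : ZMod n)) = (.inr (k : ZMod n) : CHatArc n) := by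
      simp only [cSucc, hz, Bool.false_eq_true, if_false]
      push_cast
      ring_nf
    have h3 : Relation.EqvGen (fun u v => cSucc n sp u = v)
        (.inr ((k + 1 : ℕ) : ZMod n)) (.inr (k : ZMod n)) := Relation.EqvGen.rel _ _ h2
    exact ih.trans _ _ _ (h3.symm _ _)

lemma side_eqvGen (hz : ∀ j : ZMod n, sp j = false) {x y : CHatArc n}
    (h : Relation.EqvGen (fun u v => cSucc n sp u = v) x y) : x.isLeft = y.isLeft := by
  induction h with
  | rel u v huv =>
    rw [← huv]
    match u with
    | .inl i => simp [cSucc, hz]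
    | .inr i => simp [cSucc, hz]
  | refl => rfl
  | symm _ _ _ ih => exact ih.symm
  | trans _ _ _ _ _ ih1 ih2 => exact ih1.trans ih2

lemma count_zero (hz : ∀ j : ZMod n, sp j = false) : numCircuits n sp = 2 := by
  rw [numCircuits_eq]
  have hrange : Set.range (cls sp) =
      {cls sp (.inl (0 : ZMod n)), cls sp (.inr (0 : ZMod n))} := by
    ext s
    constructor
    · rintro ⟨x, rfl⟩
      match x with
      | .inl i =>
        left
        have := chain_inl sp hz i.val
        rw [ZMod.natCast_rightInverse i] at this
        exact (cls_eq sp this).symm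
      | .inr i =>
        right
        have := chain_inr sp hz i.val
        rw [ZMod.natCast_rightInverse i] at this
        exact (cls_eq sp this).symm
    · rintro (rfl | rfl) <;> exact ⟨_, rfl⟩
  rw [hrange]
  apply Set.ncard_pair
  intro h
  have := side_eqvGen sp hz (eqvGen_of_cls_eq sp h)
  simp at this

end Zero

end Stmt8Aux

/-- For two circuit decompositions of `Ĉ_n` (`n ≥ 2`), encoded by
their split-vertex sets `sp1, sp2`, with exactly one of them splitting at each
vertex: a decomposition splitting at `nᵢ ≥ 1` vertices has exactly `nᵢ`
circuits, one splitting nowhere has exactly `2` circuits; consequently if both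
decompositions are single circuits (a bi-eulerian pair) then `n = 2`. -/
theorem stmt_8 (n : ℕ) (hn : 2 ≤ n) (sp1 sp2 : ZMod n → Bool)
    (hcomp : ∀ j : ZMod n, sp1 j ≠ sp2 j) :
    (∀ sp : ZMod n → Bool, sp = sp1 ∨ sp = sp2 →
      ({j : ZMod n | sp j = true}.ncard = 0 → numCircuits n sp = 2) ∧
      (1 ≤ {j : ZMod n | sp j = true}.ncard →
        numCircuits n sp = {j : ZMod n | sp j = true}.ncard)) ∧
    (numCircuits n sp1 = 1 ∧ numCircuits n sp2 = 1 → n = 2) := by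
  haveI : NeZero n := ⟨by omega⟩
  have key : ∀ sp : ZMod n → Bool,
      ({j : ZMod n | sp j = true}.ncard = 0 → numCircuits n sp = 2) ∧
      (1 ≤ {j : ZMod n | sp j = true}.ncard →
        numCircuits n sp = {j : ZMod n | sp j = true}.ncard) := by
    intro sp
    constructor
    · intro h0
      have hz : ∀ j : ZMod n, sp j = false := by
        rw [Set.ncard_eq_zero (Set.toFinite _)] at h0
        intro j
        by_contra hj
        simp only [Bool.not_eq_false] at hj
        have : j ∈ ({j : ZMod n | sp j = true} : Set (ZMod n)) := hj
        rw [h0] at this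
        exact this
      exact Stmt8Aux.count_zero sp hz
    · intro h1
      have hne : ({j : ZMod n | sp j = true} : Set (ZMod n)).Nonempty := by
        apply Set.nonempty_of_ncard_ne_zero; omega
      exact Stmt8Aux.count_pos sp hne
  refine ⟨fun sp _ => key sp, ?_⟩
  rintro ⟨h1, h2⟩
  have card1 : ({j : ZMod n | sp1 j = true} : Set (ZMod n)).ncard = 1 := by
    rcases Nat.eq_zero_or_pos ({j : ZMod n | sp1 j = true} : Set (ZMod n)).ncard with h | h
    · have := (key sp1).1 h; omega
    · have := (key sp1).2 h; omega
  have card2 : ({j : ZMod n | sp2 j = true} : Set (ZMod n)).ncard = 1 := by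
    rcases Nat.eq_zero_or_pos ({j : ZMod n | sp2 j = true} : Set (ZMod n)).ncard with h | h
    · have := (key sp2).1 h; omega
    · have := (key sp2).2 h; omega
  have hcompl : ({j : ZMod n | sp2 j = true} : Set (ZMod n)) =
      ({j : ZMod n | sp1 j = true} : Set (ZMod n))ᶜ := by
    ext j
    have := hcomp j
    simp only [Set.mem_setOf_eq, Set.mem_compl_iff]
    cases h1 : sp1 j <;> cases h2 : sp2 j <;> simp_all
  have := Set.ncard_add_ncard_compl ({j : ZMod n | sp1 j = true} : Set (ZMod n))
  rw [Nat.card_eq_fintype_card, ZMod.card] at this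
  rw [hcompl] at card2
  omega
end

section
/- Let G be a connected graph in which every vertex has even degree, and let C be a decomposition of the edge set of G into circuits with |C| = k circuits. If at every vertex v, every pair of half-edges at v lying in the same block of G is connected in the transition graph Tr(C, v), then every block of G is a cycle and C equals the set of blocks of G. -/
/-- Walks in a multigraph given by half-edges: a step `(g, h)` leaves the
current vertex along half-edge `g` and arrives along its mate `h`. -/
def IsHWalk {V H : Type} (vert : H → V) (mate : H → H) : V → V → List (H × H) → Prop
  | s, t, [] => s = t
  | s, t, p :: l => vert p.1 = s ∧ mate p.1 = p.2 ∧ IsHWalk vert mate (vert p.2) t l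

/-- The half-edges occurring in a walk. -/
def hFlat {H : Type} (l : List (H × H)) : List H :=
  l.map Prod.fst ++ l.map Prod.snd

/-- A cycle: a nonempty closed walk with no repeated half-edges (hence no
repeated edges) and no repeated vertices. -/
def IsHCycle {V H : Type} (vert : H → V) (mate : H → H) (l : List (H × H)) : Prop :=
  (∃ s : V, IsHWalk vert mate s s l) ∧ l ≠ [] ∧ (hFlat l).Nodup ∧
    (l.map fun p => vert p.1).Nodup

/-- The walk `l` uses the edge of half-edge `x`. -/
def usesEdge {H : Type} (mate : H → H) (l : List (H × H)) (x : H) : Prop :=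
  x ∈ hFlat l ∨ mate x ∈ hFlat l

/-- Two half-edges lie in the same block: their edges are equal or lie on a
common cycle. -/
def sameBlock {V H : Type} (vert : H → V) (mate : H → H) (x y : H) : Prop :=
  x = y ∨ mate x = y ∨ ∃ l, IsHCycle vert mate l ∧ usesEdge mate l x ∧ usesEdge mate l y

/-- Two half-edges lie on the same circuit of the circuit decomposition whose
transition system is `τ`: circuits are the components of the graph on
half-edges joining each `x` to `mate x` and to `τ x`. -/
def sameCircuit {H : Type} (mate τ : H → H) (x y : H) : Prop :=
  Relation.EqvGen (fun u w => w = mate u ∨ w = τ u) x y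

section Aux

variable {V H : Type} (vert : H → V) (mate : H → H) (τ : H → H)

lemma mem_hFlat {l : List (H × H)} {a : H} :
    a ∈ hFlat l ↔ ∃ p ∈ l, p.1 = a ∨ p.2 = a := by
  rw [hFlat, List.mem_append, List.mem_map, List.mem_map]
  aesop

lemma mem_hFlat_fst {l : List (H × H)} {p : H × H} (h : p ∈ l) : p.1 ∈ hFlat l :=
  mem_hFlat.mpr ⟨p, h, Or.inl rfl⟩

lemma mem_hFlat_snd {l : List (H × H)} {p : H × H} (h : p ∈ l) : p.2 ∈ hFlat l :=
  mem_hFlat.mpr ⟨p, h, Or.inr rfl⟩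

lemma hFlat_cons {p : H × H} {m : List (H × H)} {a : H} :
    a ∈ hFlat (p :: m) ↔ a = p.1 ∨ a = p.2 ∨ a ∈ hFlat m := by
  simp [hFlat]
  tauto

/-- In a cycle, a snd entry never equals a fst entry. -/
lemma cycle_snd_ne_fst {mm : List (H × H)} (hmm : IsHCycle vert mate mm)
    {p q : H × H} (hp : p ∈ mm) (hq : q ∈ mm) : p.2 ≠ q.1 := by
  obtain ⟨-, -, hnd, -⟩ := hmm
  rw [hFlat, List.nodup_append] at hnd
  intro h
  exact hnd.2.2 _ (List.mem_map_of_mem (f := Prod.fst) hq) _ (List.mem_map_of_mem (f := Prod.snd) hp) h.symm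


lemma sameCircuit_mate (x : H) : sameCircuit mate τ x (mate x) :=
  Relation.EqvGen.rel _ _ (Or.inl rfl)

lemma sameCircuit_tau (x : H) : sameCircuit mate τ x (τ x) :=
  Relation.EqvGen.rel _ _ (Or.inr rfl)

variable (hminv : ∀ x, mate (mate x) = x)
  (hhyp : ∀ x y : H, vert x = vert y → sameBlock vert mate x y → y = x ∨ y = τ x)

include hhyp

/-- All half-edges of a cycle are on one circuit: chain lemma. -/
lemma chain_aux {mm : List (H × H)} (hmm : IsHCycle vert mate mm) :
    ∀ (m : List (H × H)) (p : H × H) (s t : V),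
      IsHWalk vert mate s t (p :: m) → (∀ r ∈ p :: m, r ∈ mm) →
      ∀ a ∈ hFlat (p :: m), sameCircuit mate τ p.1 a := by
  intro m
  induction m with
  | nil =>
    intro p s t hw hsub a ha
    rcases hFlat_cons.mp ha with rfl | rfl | h
    · exact Relation.EqvGen.refl _
    · exact hw.2.1 ▸ sameCircuit_mate mate τ p.1
    · simp [hFlat] at h
  | cons q m ih =>
    intro p s t hw hsub a ha
    obtain ⟨hv1, hm1, hw2⟩ := hw
    have hvq : vert q.1 = vert p.2 := hw2.1
    have hne : p.2 ≠ q.1 :=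
      cycle_snd_ne_fst vert mate hmm (hsub p (by simp)) (hsub q (by simp))
    have hsb : sameBlock vert mate p.2 q.1 :=
      Or.inr (Or.inr ⟨mm, hmm, Or.inl (mem_hFlat_snd (hsub p (by simp))),
        Or.inl (mem_hFlat_fst (hsub q (by simp)))⟩)
    have hq1 : q.1 = τ p.2 := by
      rcases hhyp p.2 q.1 hvq.symm hsb with h | h
      · exact absurd h.symm hne
      · exact h
    have hpq : sameCircuit mate τ p.1 q.1 := by
      refine Relation.EqvGen.trans _ p.2 _ ?_ ?_
      · exact hm1 ▸ sameCircuit_mate mate τ p.1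
      · exact hq1 ▸ sameCircuit_tau mate τ p.2
    rcases hFlat_cons.mp ha with rfl | rfl | h
    · exact Relation.EqvGen.refl _
    · exact hm1 ▸ sameCircuit_mate mate τ p.1
    · exact Relation.EqvGen.trans _ _ _ hpq
        (ih q (vert p.2) t hw2 (fun r hr => hsub r (List.mem_cons_of_mem _ hr)) a h)

/-- All half-edges of a cycle are mutually on one circuit. -/
lemma cycle_sameCircuit {mm : List (H × H)} (hmm : IsHCycle vert mate mm) :
    ∀ a ∈ hFlat mm, ∀ b ∈ hFlat mm, sameCircuit mate τ a b := by
  intro a ha b hb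
  match mm, hmm, ha, hb with
  | p :: m, hc, ha, hb =>
    obtain ⟨s, hw⟩ := hc.1
    have h1 := chain_aux vert mate τ hhyp hc m p s s hw (fun r hr => hr) a ha
    have h2 := chain_aux vert mate τ hhyp hc m p s s hw (fun r hr => hr) b hb
    exact Relation.EqvGen.trans _ _ _ (Relation.EqvGen.symm _ _ h1) h2

end Aux

/-- The standard closed walk following a circuit: step `i` is
`(σ^[i] a, mate (σ^[i] a))` where `σ = τ ∘ mate`. -/
def orbWalk {H : Type} (mate σ : H → H) (a : H) (k : ℕ) : List (H × H) :=
  (List.range k).map fun i => (σ^[i] a, mate (σ^[i] a))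

section Orb

variable {V H : Type} (vert : H → V) (mate : H → H) (τ : H → H) (σ : H → H)

lemma orbWalk_ne_nil {a : H} {k : ℕ} (hk : 0 < k) : orbWalk mate σ a k ≠ [] := by
  simp [orbWalk, List.range_eq_nil]
  omega

lemma mem_hFlat_orbWalk {a u : H} {k : ℕ} :
    u ∈ hFlat (orbWalk mate σ a k) ↔
      ∃ i < k, u = σ^[i] a ∨ u = mate (σ^[i] a) := by
  simp [hFlat, orbWalk]
  aesop

lemma orbWalk_map_vert {a : H} {k : ℕ} :
    (orbWalk mate σ a k).map (fun p => vert p.1) =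
      (List.range k).map (fun i => vert (σ^[i] a)) := by
  simp [orbWalk]

lemma orbWalk_succ {a : H} {k : ℕ} :
    orbWalk mate σ a (k + 1) = (a, mate a) :: orbWalk mate σ (σ a) k := by
  unfold orbWalk
  rw [List.range_succ_eq_map, List.map_cons, List.map_map]
  simp [Function.comp, Function.iterate_succ_apply]

variable (hτvert : ∀ x, vert (τ x) = vert x) (hσ : ∀ h, σ h = τ (mate h))

include hτvert hσ in
lemma vert_mate_eq_vert_sigma (a : H) : vert (mate a) = vert (σ a) := by
  rw [hσ, hτvert]

include hτvert hσ in
lemma orbWalk_isHWalk :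
    ∀ (k : ℕ) (a : H), IsHWalk vert mate (vert a) (vert (σ^[k] a)) (orbWalk mate σ a k) := by
  intro k
  induction k with
  | zero => intro a; simp [orbWalk, IsHWalk]
  | succ k ih =>
    intro a
    rw [orbWalk_succ]
    refine ⟨rfl, rfl, ?_⟩
    have := ih (σ a)
    rw [← Function.iterate_succ_apply] at this
    rwa [vert_mate_eq_vert_sigma vert mate τ σ hτvert hσ]

variable (hminv : ∀ x, mate (mate x) = x) (hτinv : ∀ x, τ (τ x) = x)

include hminv hτinv hσ in
lemma sigma_inj : Function.Injective σ := by
  have : Function.LeftInverse (fun h => mate (τ h)) σ := by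
    intro a; simp [hσ, hτinv, hminv]
  exact this.injective

include hminv hτinv hσ in
lemma iter_cancel {x : H} {i d : ℕ} (h : σ^[i] x = σ^[i] (σ^[d] x)) : σ^[d] x = x :=
  ((sigma_inj mate τ σ hσ hminv hτinv).iterate i h).symm

include hminv hτinv hσ in
lemma iter_inj_on {x : H} {i j : ℕ} (hij : i < j)
    (hjn : j < Function.minimalPeriod σ x) : σ^[i] x ≠ σ^[j] x := by
  intro h
  have h2 : σ^[j] x = σ^[i] (σ^[j - i] x) := by
    rw [← Function.iterate_add_apply]
    congr 1
    omega
  have h3 : Function.IsPeriodicPt σ (j - i) x :=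
    iter_cancel mate τ σ hσ hminv hτinv (h.trans h2)
  have := h3.minimalPeriod_le (by omega)
  omega

include hminv hτinv hσ in
lemma mem_periodicPts_sigma [Finite H] (x : H) : x ∈ Function.periodicPts σ := by
  obtain ⟨i, j, hne, heq⟩ := Finite.exists_ne_map_eq_of_infinite (fun i : ℕ => σ^[i] x)
  rcases hne.lt_or_gt with h | h
  · refine Function.mk_mem_periodicPts (n := j - i) (by omega) ?_
    refine iter_cancel mate τ σ hσ hminv hτinv (i := i) ?_
    rw [← Function.iterate_add_apply, heq]
    congr 1
    omega
  · refine Function.mk_mem_periodicPts (n := i - j) (by omega) ?_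
    refine iter_cancel mate τ σ hσ hminv hτinv (i := j) ?_
    rw [← Function.iterate_add_apply, ← heq]
    congr 1
    omega

variable (hmnfp : ∀ x, mate x ≠ x) (hτnfp : ∀ x, τ x ≠ x)
  (hhyp : ∀ x y : H, vert x = vert y → sameBlock vert mate x y → y = x ∨ y = τ x)

include hσ hminv hτinv hτvert hmnfp hτnfp hhyp in
lemma no_coincidence (x : H) :
    ∀ d i j, j - i = d → i < j → j < Function.minimalPeriod σ x →
      vert (σ^[i] x) ≠ vert (σ^[j] x) := by
  intro d
  induction d using Nat.strong_induction_on with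
  | _ d IH =>
  intro i j hd hij hjn hveq
  have hX : ∀ k, σ^[k+1] x = τ (mate (σ^[k] x)) := fun k => by
    rw [Function.iterate_succ_apply', hσ]
  have hvX : ∀ k, vert (mate (σ^[k] x)) = vert (σ^[k+1] x) := fun k => by
    rw [hX, hτvert]
  have key : mate (σ^[j-1] x) = σ^[i] x → False := by
    intro hk
    have h1 : mate (σ^[i] x) = σ^[j-1] x := by rw [← hk, hminv]
    rcases Nat.lt_or_ge (i+1) j with h2 | h2
    · have hx1 : σ^[i+1] x = τ (σ^[j-1] x) := by rw [hX, h1]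
      rcases Nat.lt_or_ge (i+1) (j-1) with h3 | h3
      · exact IH (j-1-(i+1)) (by omega) (i+1) (j-1) (by omega) h3 (by omega)
          (by rw [hx1, hτvert])
      · have h4 : i+1 = j-1 := by omega
        rw [← h4] at hx1
        exact hτnfp _ hx1.symm
    · have h4 : j - 1 = i := by omega
      rw [h4] at h1
      exact hmnfp _ h1
  have hdpos : 0 < d := by omega
  have hXt : ∀ t, σ^[t] (σ^[i] x) = σ^[i+t] x := fun t => by
    rw [← Function.iterate_add_apply]; congr 1; omega
  have hij' : j = i + d := by omega
  set l' := orbWalk mate σ (σ^[i] x) d with hl'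
  have hvnd : (l'.map (fun p => vert p.1)).Nodup := by
    rw [hl', orbWalk_map_vert]
    refine (List.nodup_map_iff_inj_on (List.nodup_range : (List.range d).Nodup)).mpr ?_
    intro t ht s hs hts
    rw [List.mem_range] at ht hs
    rw [hXt, hXt] at hts
    by_contra hne
    rcases Nat.lt_or_ge t s with h | h
    · exact IH (s - t) (by omega) (i+t) (i+s) (by omega) (by omega) (by omega) hts
    · exact IH (t - s) (by omega) (i+s) (i+t) (by omega) (by omega) (by omega) hts.symm
  have hm_inj : Function.Injective mate :=
    Function.LeftInverse.injective (g := mate) hminv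
  have hfst_eq : l'.map Prod.fst = (List.range d).map (fun t => σ^[t] (σ^[i] x)) := by
    rw [hl']; unfold orbWalk; rw [List.map_map]; rfl
  have hsnd_eq : l'.map Prod.snd = (l'.map Prod.fst).map mate := by
    rw [hl']; unfold orbWalk; rw [List.map_map, List.map_map, List.map_map]; rfl
  have hfnd : (l'.map Prod.fst).Nodup := by
    have h5 := hvnd
    rw [show (fun p : H × H => vert p.1) = vert ∘ Prod.fst from rfl,
      ← List.map_map] at h5
    exact h5.of_map vert
  have hfl_nd : (hFlat l').Nodup := by
    rw [hFlat, List.nodup_append]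
    refine ⟨hfnd, by rw [hsnd_eq]; exact hfnd.map hm_inj, ?_⟩
    intro u hu1 u' hu2 (hu' : u = u')
    rw [← hu'] at hu2
    rw [hfst_eq, List.mem_map] at hu1
    rw [hsnd_eq, hfst_eq, List.map_map, List.mem_map] at hu2
    obtain ⟨t, ht, hut⟩ := hu1
    obtain ⟨s, hs, hus⟩ := hu2
    rw [List.mem_range] at ht hs
    simp only [Function.comp] at hus
    have hcross : σ^[i+t] x = mate (σ^[i+s] x) := by
      rw [← hXt, ← hXt, hut, ← hus]
    have hvv : vert (σ^[i+t] x) = vert (σ^[i+s+1] x) := by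
      rw [hcross, hvX]
    rcases Nat.lt_or_ge (s+1) d with h6 | h6
    · rcases lt_trichotomy t (s+1) with h7 | h7 | h7
      · exact IH (s+1-t) (by omega) (i+t) (i+s+1) (by omega) (by omega) (by omega) hvv
      · rw [show i+t = i+s+1 by omega] at hcross
        rw [hX] at hcross
        exact hτnfp _ hcross
      · exact IH (t-(s+1)) (by omega) (i+s+1) (i+t) (by omega) (by omega) (by omega) hvv.symm
    · have h6' : s + 1 = d := by omega
      rcases Nat.eq_zero_or_pos t with h7 | h7
      · refine key ?_
        rw [show j - 1 = i + s by omega, ← hcross, h7]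
        simp
      · refine IH t (by omega) i (i+t) (by omega) (by omega) (by omega) ?_
        rw [hvv, show i+s+1 = j by omega, ← hveq]
  have hw' : IsHWalk vert mate (vert (σ^[i] x)) (vert (σ^[i] x)) l' := by
    have h8 := orbWalk_isHWalk vert mate τ σ hτvert hσ d (σ^[i] x)
    rwa [hXt, show i + d = j by omega, ← hveq] at h8
  have hcyc : IsHCycle vert mate l' :=
    ⟨⟨vert (σ^[i] x), hw'⟩, orbWalk_ne_nil mate σ hdpos, hfl_nd, hvnd⟩
  have hv2 : vert (mate (σ^[j-1] x)) = vert (σ^[i] x) := by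
    rw [hvX (j-1), show j - 1 + 1 = j by omega, ← hveq]
  have us1 : usesEdge mate l' (mate (σ^[j-1] x)) := by
    refine Or.inl ((mem_hFlat_orbWalk mate σ).mpr ⟨d-1, by omega, Or.inr ?_⟩)
    rw [hXt, show i + (d-1) = j - 1 by omega]
  have us2 : usesEdge mate l' (σ^[i] x) :=
    Or.inl ((mem_hFlat_orbWalk mate σ).mpr ⟨0, hdpos, Or.inl (by simp)⟩)
  rcases hhyp (mate (σ^[j-1] x)) (σ^[i] x) hv2
      (Or.inr (Or.inr ⟨l', hcyc, us1, us2⟩)) with h | h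
  · exact key h.symm
  · rw [← hX, show j - 1 + 1 = j by omega] at h
    exact iter_inj_on mate τ σ hσ hminv hτinv hij hjn h

include hσ hminv hτinv hτvert hmnfp hτnfp hhyp in
lemma orb_cycle [Finite H] (x : H) :
    IsHCycle vert mate (orbWalk mate σ x (Function.minimalPeriod σ x)) := by
  set n := Function.minimalPeriod σ x with hn
  have hper : x ∈ Function.periodicPts σ :=
    mem_periodicPts_sigma mate τ σ hσ hminv hτinv x
  have hnpos : 0 < n := Function.minimalPeriod_pos_of_mem_periodicPts hper
  have hXn : σ^[n] x = x := Function.iterate_minimalPeriod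
  have hnc := no_coincidence vert mate τ σ hτvert hσ hminv hτinv hmnfp hτnfp hhyp x
  have hX : ∀ k, σ^[k+1] x = τ (mate (σ^[k] x)) := fun k => by
    rw [Function.iterate_succ_apply', hσ]
  have hvX : ∀ k, vert (mate (σ^[k] x)) = vert (σ^[k+1] x) := fun k => by
    rw [hX, hτvert]
  set l' := orbWalk mate σ x n with hl'
  have hvnd : (l'.map (fun p => vert p.1)).Nodup := by
    rw [hl', orbWalk_map_vert]
    refine (List.nodup_map_iff_inj_on (List.nodup_range : (List.range n).Nodup)).mpr ?_
    intro t ht s hs hts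
    rw [List.mem_range] at ht hs
    by_contra hne
    rcases Nat.lt_or_ge t s with h | h
    · exact hnc (s - t) t s rfl h hs hts
    · exact hnc (t - s) s t rfl (by omega) ht hts.symm
  have hm_inj : Function.Injective mate :=
    Function.LeftInverse.injective (g := mate) hminv
  have hfst_eq : l'.map Prod.fst = (List.range n).map (fun t => σ^[t] x) := by
    rw [hl']; unfold orbWalk; rw [List.map_map]; rfl
  have hsnd_eq : l'.map Prod.snd = (l'.map Prod.fst).map mate := by
    rw [hl']; unfold orbWalk; rw [List.map_map, List.map_map, List.map_map]; rfl
  have hfnd : (l'.map Prod.fst).Nodup := by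
    have h5 := hvnd
    rw [show (fun p : H × H => vert p.1) = vert ∘ Prod.fst from rfl,
      ← List.map_map] at h5
    exact h5.of_map vert
  have hfl_nd : (hFlat l').Nodup := by
    rw [hFlat, List.nodup_append]
    refine ⟨hfnd, by rw [hsnd_eq]; exact hfnd.map hm_inj, ?_⟩
    intro u hu1 u' hu2 (hu' : u = u')
    rw [← hu'] at hu2
    rw [hfst_eq, List.mem_map] at hu1
    rw [hsnd_eq, hfst_eq, List.map_map, List.mem_map] at hu2
    obtain ⟨t, ht, hut⟩ := hu1
    obtain ⟨s, hs, hus⟩ := hu2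
    rw [List.mem_range] at ht hs
    simp only [Function.comp] at hus
    have hcross : σ^[t] x = mate (σ^[s] x) := by rw [hut, ← hus]
    have hvv : vert (σ^[t] x) = vert (σ^[s+1] x) := by
      rw [hcross, hvX]
    rcases Nat.lt_or_ge (s+1) n with h6 | h6
    · rcases lt_trichotomy t (s+1) with h7 | h7 | h7
      · exact hnc (s+1-t) t (s+1) rfl h7 h6 hvv
      · rw [h7, hX] at hcross
        exact hτnfp _ hcross
      · exact hnc (t-(s+1)) (s+1) t rfl h7 ht hvv.symm
    · have h6' : s + 1 = n := by omega
      rcases Nat.eq_zero_or_pos t with h7 | h7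
      · rw [h7] at hcross
        have h8 : σ^[n] x = τ x := by
          have h9 := hX s
          rw [h6', ← hcross] at h9
          simpa using h9
        rw [hXn] at h8
        exact hτnfp x h8.symm
      · refine hnc t 0 t rfl h7 ht ?_
        rw [hvv, h6', hXn]
        simp
  have hw' : IsHWalk vert mate (vert x) (vert x) l' := by
    have h8 := orbWalk_isHWalk vert mate τ σ hτvert hσ n x
    rwa [hXn] at h8
  exact ⟨⟨vert x, hw'⟩, orbWalk_ne_nil mate σ hnpos, hfl_nd, hvnd⟩

include hσ hminv hτinv in
lemma flat_closure [Finite H] (x : H) :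
    ∀ u ∈ hFlat (orbWalk mate σ x (Function.minimalPeriod σ x)),
      mate u ∈ hFlat (orbWalk mate σ x (Function.minimalPeriod σ x)) ∧
      τ u ∈ hFlat (orbWalk mate σ x (Function.minimalPeriod σ x)) := by
  set n := Function.minimalPeriod σ x with hn
  have hper : x ∈ Function.periodicPts σ :=
    mem_periodicPts_sigma mate τ σ hσ hminv hτinv x
  have hnpos : 0 < n := Function.minimalPeriod_pos_of_mem_periodicPts hper
  have hXn : σ^[n] x = x := Function.iterate_minimalPeriod
  have hX : ∀ k, σ^[k+1] x = τ (mate (σ^[k] x)) := fun k => by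
    rw [Function.iterate_succ_apply', hσ]
  intro u hu
  rw [mem_hFlat_orbWalk mate σ] at hu
  obtain ⟨i, hi, hu | hu⟩ := hu
  · constructor
    · exact (mem_hFlat_orbWalk mate σ).mpr ⟨i, hi, Or.inr (by rw [hu])⟩
    · rcases Nat.eq_zero_or_pos i with h0 | h0
      · refine (mem_hFlat_orbWalk mate σ).mpr ⟨n-1, by omega, Or.inr ?_⟩
        have h1 := hX (n-1)
        rw [show n-1+1 = n by omega, hXn] at h1
        rw [hu, h0]
        simp only [Function.iterate_zero, id_eq]
        conv_lhs => rw [h1]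
        rw [hτinv]
      · refine (mem_hFlat_orbWalk mate σ).mpr ⟨i-1, by omega, Or.inr ?_⟩
        have h1 := hX (i-1)
        rw [show i-1+1 = i by omega] at h1
        rw [hu, h1, hτinv]
  · constructor
    · exact (mem_hFlat_orbWalk mate σ).mpr ⟨i, hi, Or.inl (by rw [hu, hminv])⟩
    · rcases Nat.lt_or_ge (i+1) n with h0 | h0
      · refine (mem_hFlat_orbWalk mate σ).mpr ⟨i+1, h0, Or.inl ?_⟩
        rw [hu, hX]
      · refine (mem_hFlat_orbWalk mate σ).mpr ⟨0, hnpos, Or.inl ?_⟩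
        rw [hu, ← hX, show i+1 = n by omega, hXn]
        simp

end Orb



/-- Let `G` be a connected eulerian multigraph (half-edge form,
nontrivial) and let `C` be a circuit decomposition of `G`, encoded by its
transition system `τ` (a fixed-point-free involution pairing half-edges at each
vertex).  If at every vertex every pair of half-edges lying in the same block is
connected in the transition graph `Tr(C, v)` (i.e. equal or matched by `τ`),
then every block of `G` is a cycle and `C` is exactly the set of blocks
(cycles) of `G`. -/
theorem stmt_15 {V H : Type} [Fintype V] [Fintype H] [Nonempty H]
    (vert : H → V) (mate : H → H)
    (hminv : ∀ x, mate (mate x) = x) (hmnfp : ∀ x, mate x ≠ x)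
    (hconn : ∀ u v : V, ∃ l : List (H × H), IsHWalk vert mate u v l)
    (τ : H → H) (hτinv : ∀ x, τ (τ x) = x) (hτnfp : ∀ x, τ x ≠ x)
    (hτvert : ∀ x, vert (τ x) = vert x)
    (hhyp : ∀ x y : H, vert x = vert y → sameBlock vert mate x y → y = x ∨ y = τ x) :
    (∀ x y : H, sameBlock vert mate x y ↔ sameCircuit mate τ x y) ∧
    (∀ x : H, ∃ l : List (H × H), IsHCycle vert mate l ∧
      ∀ y : H, (usesEdge mate l y ↔ sameBlock vert mate x y)) := by
  set σ : H → H := fun h => τ (mate h) with hσdef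
  have hσ : ∀ h, σ h = τ (mate h) := fun _ => rfl
  set L : H → List (H × H) := fun x => orbWalk mate σ x (Function.minimalPeriod σ x)
    with hL
  have hcyc : ∀ x, IsHCycle vert mate (L x) := fun x =>
    orb_cycle vert mate τ σ hτvert hσ hminv hτinv hmnfp hτnfp hhyp x
  have hclos : ∀ x, ∀ u ∈ hFlat (L x), mate u ∈ hFlat (L x) ∧ τ u ∈ hFlat (L x) :=
    fun x => flat_closure mate τ σ hσ hminv hτinv x
  have hmemx : ∀ x, x ∈ hFlat (L x) := by
    intro x
    have hnpos : 0 < Function.minimalPeriod σ x :=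
      Function.minimalPeriod_pos_of_mem_periodicPts
        (mem_periodicPts_sigma mate τ σ hσ hminv hτinv x)
    exact (mem_hFlat_orbWalk mate σ).mpr ⟨0, hnpos, Or.inl (by simp)⟩
  have husE : ∀ x u, usesEdge mate (L x) u ↔ u ∈ hFlat (L x) := by
    intro x u
    constructor
    · rintro (h | h)
      · exact h
      · have := (hclos x _ h).1
        rwa [hminv] at this
    · exact Or.inl
  have hiii : ∀ x y, sameCircuit mate τ x y → y ∈ hFlat (L x) := by
    intro x y h
    have key : ∀ u v : H, sameCircuit mate τ u v →
        (u ∈ hFlat (L x) ↔ v ∈ hFlat (L x)) := by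
      intro u v h
      induction h with
      | rel u v huv =>
        rcases huv with rfl | rfl
        · constructor
          · exact fun hu => (hclos x u hu).1
          · intro hv
            have := (hclos x _ hv).1
            rwa [hminv] at this
        · constructor
          · exact fun hu => (hclos x u hu).2
          · intro hv
            have := (hclos x _ hv).2
            rwa [hτinv] at this
      | refl u => exact Iff.rfl
      | symm u v _ ih => exact ih.symm
      | trans u v w _ _ ih1 ih2 => exact ih1.trans ih2
    exact (key x y h).mp (hmemx x)
  have hfwd : ∀ x y, sameBlock vert mate x y → sameCircuit mate τ x y := by
    intro x y h
    rcases h with rfl | h | ⟨m, hm, hux, huy⟩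
    · exact Relation.EqvGen.refl _
    · exact h ▸ sameCircuit_mate mate τ x
    · have hall := cycle_sameCircuit vert mate τ hhyp hm
      rcases hux with hx | hx <;> rcases huy with hy | hy
      · exact hall x hx y hy
      · exact Relation.EqvGen.trans _ _ _ (hall x hx (mate y) hy)
          (Relation.EqvGen.symm _ _ (sameCircuit_mate mate τ y))
      · exact Relation.EqvGen.trans _ _ _ (sameCircuit_mate mate τ x)
          (hall (mate x) hx y hy)
      · exact Relation.EqvGen.trans _ _ _ (sameCircuit_mate mate τ x)
          (Relation.EqvGen.trans _ _ _ (hall (mate x) hx (mate y) hy)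
            (Relation.EqvGen.symm _ _ (sameCircuit_mate mate τ y)))
  constructor
  · intro x y
    refine ⟨hfwd x y, fun h => ?_⟩
    exact Or.inr (Or.inr ⟨L x, hcyc x, Or.inl (hmemx x), Or.inl (hiii x y h)⟩)
  · intro x
    refine ⟨L x, hcyc x, fun y => ⟨fun h => ?_, fun h => ?_⟩⟩
    · exact Or.inr (Or.inr ⟨L x, hcyc x, Or.inl (hmemx x), h⟩)
    · exact Or.inl (hiii x y (hfwd x y h))
end
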